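/- Let s > 2 and ε > 0. Then there exists a constant C > 0 (depending only on s and ε) such that for all sequences a, b : ℤ → ℂ, the sequence I₁(k) := Σ_{k'∈ℤ, |k'| ≥ |k|/2} ( ⟨k⟩^s − ⟨k'⟩^s − s·(k−k')·k'·⟨k'⟩^{s−2} ) · a(k−k') · b(k') satisfies ‖I₁‖_{ℓ²} ≤ C ‖a‖_{ℓ²_{5/2+ε}} ‖b‖_{ℓ²_{s−2}}. -/

import Mathlib

open scoped ENNReal
open MeasureTheory

/-- Japanese bracket `⟨k⟩ = (1 + k²)^(1/2)` for an integer `k`. -/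
noncomputable def jb (k : ℤ) : ℝ := Real.sqrt (1 + (k : ℝ) ^ 2)

/-- Weighted `ℓ²_s` norm of a sequence `a : ℤ → ℂ`, valued in `[0,∞]`. -/
noncomputable def l2 (s : ℝ) (a : ℤ → ℂ) : ℝ≥0∞ :=
  (∑' k : ℤ, ENNReal.ofReal (jb k ^ (2 * s) * ‖a k‖ ^ 2)) ^ (1 / 2 : ℝ)

/-! ### Auxiliary facts about `jb` -/

lemma jb_pos (k : ℤ) : 0 < jb k := Real.sqrt_pos.2 (by positivity)

lemma jb_neg (n : ℤ) : jb (-n) = jb n := by simp [jb]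

lemma jb_rpow (k : ℤ) (t : ℝ) : jb k ^ t = (1 + (k : ℝ) ^ 2) ^ (t / 2) := by
  rw [jb, Real.sqrt_eq_rpow, ← Real.rpow_mul (by positivity), one_div, inv_mul_eq_div]

lemma jb_sq (k : ℤ) : jb k ^ (2:ℝ) = 1 + (k:ℝ)^2 := by
  rw [jb_rpow]; norm_num

lemma jb_ge_self (n : ℕ) : ((n : ℝ)) ≤ jb (n : ℤ) := by
  rw [jb, show ((n:ℤ):ℝ) = (n:ℝ) by push_cast; ring]
  exact Real.le_sqrt_of_sq_le (by nlinarith [sq_nonneg (n:ℝ)])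

lemma summable_jb_rpow {r : ℝ} (hr : r < -1) : Summable (fun j : ℤ => jb j ^ r) := by
  have hbase : Summable (fun n : ℕ => (((n + 1 : ℕ)) : ℝ) ^ r) :=
    (summable_nat_add_iff 1).2 (Real.summable_nat_rpow.2 hr)
  have hshift : Summable (fun n : ℕ => jb (((n + 1 : ℕ)) : ℤ) ^ r) := by
    apply Summable.of_nonneg_of_le (fun n => (Real.rpow_pos_of_pos (jb_pos _) r).le)
      (fun n => ?_) hbase
    exact Real.rpow_le_rpow_of_nonpos (by positivity) (jb_ge_self (n + 1))
      (by linarith : r ≤ 0)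
  have hnat : Summable (fun n : ℕ => jb (n : ℤ) ^ r) :=
    (summable_nat_add_iff 1).1 hshift
  exact Summable.of_nat_of_neg (f := fun j : ℤ => jb j ^ r) hnat
    (by simpa only [jb_neg] using hnat)

/-! ### Calculus: the second-order Taylor estimate for `φ(x) = (1+x²)^(s/2)` -/

lemma phi_deriv (s x : ℝ) :
    HasDerivAt (fun x : ℝ => (1 + x ^ 2) ^ (s / 2)) (s * x * (1 + x ^ 2) ^ (s / 2 - 1)) x := by
  have h1 : HasDerivAt (fun x : ℝ => 1 + x ^ 2) (2 * x) x := by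
    simpa using (hasDerivAt_pow 2 x).const_add 1
  have h2 := h1.rpow_const (p := s / 2) (Or.inl (by positivity))
  convert h2 using 1
  ring

lemma phi_deriv2 (s x : ℝ) :
    HasDerivAt (fun x : ℝ => s * x * (1 + x ^ 2) ^ (s / 2 - 1))
      (s * (1 + (s - 1) * x ^ 2) * (1 + x ^ 2) ^ (s / 2 - 2)) x := by
  have hpos : (0 : ℝ) < 1 + x ^ 2 := by positivity
  have h1 : HasDerivAt (fun x : ℝ => 1 + x ^ 2) (2 * x) x := by
    simpa using (hasDerivAt_pow 2 x).const_add 1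
  have h2 := h1.rpow_const (p := s / 2 - 1) (Or.inl (by positivity))
  have h3 : HasDerivAt (fun x : ℝ => s * x) s x := by
    simpa using (hasDerivAt_id x).const_mul s
  have h4 := h3.mul h2
  convert h4 using 1
  · rfl
  · rfl
  · rfl
  have e2 : s / 2 - 1 - 1 = s / 2 - 2 := by ring
  rw [e2, show s / 2 - 1 = 1 + (s / 2 - 2) by ring, Real.rpow_add hpos, Real.rpow_one]
  ring

lemma phi2_bound (s : ℝ) (hs : 2 < s) (y z : ℝ) (hz : |z| ≤ 2 * |y|) :
    |s * (1 + (s - 1) * z ^ 2) * (1 + z ^ 2) ^ (s / 2 - 2)| ≤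
      s * (s - 1) * 4 ^ (s / 2) * (1 + y ^ 2) ^ (s / 2 - 1) := by
  have hzp : (0 : ℝ) < 1 + z ^ 2 := by positivity
  have hyp : (0 : ℝ) < 1 + y ^ 2 := by positivity
  have habs : |s * (1 + (s - 1) * z ^ 2) * (1 + z ^ 2) ^ (s / 2 - 2)| =
      s * (1 + (s - 1) * z ^ 2) * (1 + z ^ 2) ^ (s / 2 - 2) := by
    apply abs_of_nonneg
    have : (0:ℝ) ≤ 1 + (s - 1) * z ^ 2 := by nlinarith [sq_nonneg z]
    positivity
  rw [habs]
  have hz2 : z ^ 2 ≤ 4 * y ^ 2 := by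
    have := sq_abs z; have := sq_abs y
    nlinarith [abs_nonneg z, abs_nonneg y]
  have step1 : s * (1 + (s - 1) * z ^ 2) * (1 + z ^ 2) ^ (s / 2 - 2) ≤
      s * (s - 1) * ((1 + z ^ 2) * (1 + z ^ 2) ^ (s / 2 - 2)) := by
    have h1 : 1 + (s - 1) * z ^ 2 ≤ (s - 1) * (1 + z ^ 2) := by nlinarith [sq_nonneg z]
    have h2 : (0:ℝ) ≤ (1 + z ^ 2) ^ (s / 2 - 2) := le_of_lt (Real.rpow_pos_of_pos hzp _)
    nlinarith [mul_le_mul_of_nonneg_right h1 h2, hs]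
  have e1 : (1 + z ^ 2) * (1 + z ^ 2) ^ (s / 2 - 2) = (1 + z ^ 2) ^ (s / 2 - 1) := by
    rw [show s / 2 - 1 = 1 + (s / 2 - 2) by ring, Real.rpow_add hzp, Real.rpow_one]
  rw [e1] at step1
  refine step1.trans ?_
  have step2 : (1 + z ^ 2) ^ (s / 2 - 1) ≤ (4 * (1 + y ^ 2)) ^ (s / 2 - 1) := by
    apply Real.rpow_le_rpow (le_of_lt hzp) (by nlinarith) (by linarith)
  have e2 : (4 * (1 + y ^ 2)) ^ (s / 2 - 1) = 4 ^ (s / 2 - 1) * (1 + y ^ 2) ^ (s / 2 - 1) :=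
    Real.mul_rpow (by norm_num) (le_of_lt hyp)
  have step3 : (4:ℝ) ^ (s / 2 - 1) ≤ 4 ^ (s / 2) :=
    Real.rpow_le_rpow_of_exponent_le (by norm_num) (by linarith)
  have hss : (0:ℝ) ≤ s * (s - 1) := by nlinarith
  calc s * (s - 1) * (1 + z ^ 2) ^ (s / 2 - 1)
      ≤ s * (s - 1) * ((4 * (1 + y ^ 2)) ^ (s / 2 - 1)) := by
        exact mul_le_mul_of_nonneg_left step2 hss
    _ = s * (s - 1) * 4 ^ (s / 2 - 1) * (1 + y ^ 2) ^ (s / 2 - 1) := by rw [e2]; ring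
    _ ≤ s * (s - 1) * 4 ^ (s / 2) * (1 + y ^ 2) ^ (s / 2 - 1) := by
        have := le_of_lt (Real.rpow_pos_of_pos hyp (s / 2 - 1))
        nlinarith [mul_le_mul_of_nonneg_left step3 hss]

/-- Second-order Taylor bound for `φ(x) = (1+x²)^(s/2)` on the region `|x| ≤ 2|y|`. -/
lemma taylor_bound (s : ℝ) (hs : 2 < s) (x y : ℝ) (hxy : |x| ≤ 2 * |y|) :
    |(1 + x ^ 2) ^ (s / 2) - (1 + y ^ 2) ^ (s / 2) - s * (x - y) * y * (1 + y ^ 2) ^ (s / 2 - 1)|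
      ≤ s * (s - 1) * 4 ^ (s / 2) * (1 + y ^ 2) ^ (s / 2 - 1) * (x - y) ^ 2 := by
  set K : ℝ := s * (s - 1) * 4 ^ (s / 2) * (1 + y ^ 2) ^ (s / 2 - 1) with hK
  have hKnn : 0 ≤ K := by
    have : (0:ℝ) < (1 + y ^ 2) ^ (s / 2 - 1) := Real.rpow_pos_of_pos (by positivity) _
    have h4 : (0:ℝ) < (4:ℝ) ^ (s / 2) := Real.rpow_pos_of_pos (by norm_num) _
    exact le_of_lt (mul_pos (mul_pos (mul_pos (by linarith) (by linarith)) h4) this)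
  set φ : ℝ → ℝ := fun z => (1 + z ^ 2) ^ (s / 2) with hφ
  set φ' : ℝ → ℝ := fun z => s * z * (1 + z ^ 2) ^ (s / 2 - 1) with hφ'
  set T : Set ℝ := Set.uIcc x y with hT
  have hxT : x ∈ T := Set.left_mem_uIcc
  have hyT : y ∈ T := Set.right_mem_uIcc
  have hmemabs : ∀ z ∈ T, |z| ≤ 2 * |y| := by
    intro z hz
    rcases Set.mem_uIcc.1 hz with ⟨h1, h2⟩ | ⟨h1, h2⟩ <;>
      [refine abs_le.2 ⟨?_, ?_⟩; refine abs_le.2 ⟨?_, ?_⟩] <;>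
      cases abs_cases x <;> cases abs_cases y <;> linarith [abs_le.1 hxy, neg_abs_le x,
        le_abs_self y, neg_abs_le y, abs_nonneg y]
  have hsubdist : ∀ z ∈ T, |z - y| ≤ |x - y| := by
    intro z hz
    rcases Set.mem_uIcc.1 hz with ⟨h1, h2⟩ | ⟨h1, h2⟩ <;>
      exact abs_le.2 ⟨by linarith [neg_abs_le (x - y), abs_nonneg (x - y)],
        by linarith [le_abs_self (x - y), abs_nonneg (x - y)]⟩
  have hlip : ∀ z ∈ T, |φ' z - φ' y| ≤ K * |x - y| := by
    intro z hz
    have h1 : |φ' z - φ' y| ≤ K * |z - y| := by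
      have := Convex.norm_image_sub_le_of_norm_hasDerivWithin_le
        (f := φ') (f' := fun w => s * (1 + (s - 1) * w ^ 2) * (1 + w ^ 2) ^ (s / 2 - 2))
        (s := T) (C := K)
        (fun w _ => (phi_deriv2 s w).hasDerivWithinAt)
        (fun w hw => phi2_bound s hs y w (hmemabs w hw))
        (convex_uIcc x y) hyT hz
      simpa [Real.norm_eq_abs] using this
    exact h1.trans (mul_le_mul_of_nonneg_left (hsubdist z hz) hKnn)
  have houter : |(φ x - φ' y * x) - (φ y - φ' y * y)| ≤ K * |x - y| * |x - y| := by
    have hg : ∀ z ∈ T, HasDerivWithinAt (fun w => φ w - φ' y * w) (φ' z - φ' y) T z := by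
      intro z _
      exact ((phi_deriv s z).sub (((hasDerivAt_id z).const_mul (φ' y)).congr_deriv
        (by simp))).hasDerivWithinAt
    have := Convex.norm_image_sub_le_of_norm_hasDerivWithin_le
      (f := fun w => φ w - φ' y * w) (f' := fun z => φ' z - φ' y)
      (s := T) (C := K * |x - y|) hg
      (fun z hz => by simpa [Real.norm_eq_abs] using hlip z hz)
      (convex_uIcc x y) hyT hxT
    simpa [Real.norm_eq_abs] using this
  have heq : (1 + x ^ 2) ^ (s / 2) - (1 + y ^ 2) ^ (s / 2)
      - s * (x - y) * y * (1 + y ^ 2) ^ (s / 2 - 1)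
      = (φ x - φ' y * x) - (φ y - φ' y * y) := by
    simp only [hφ, hφ']
    ring
  rw [heq]
  calc |(φ x - φ' y * x) - (φ y - φ' y * y)| ≤ K * |x - y| * |x - y| := houter
    _ = K * (x - y) ^ 2 := by rw [mul_assoc, ← abs_mul, ← sq, abs_of_nonneg (sq_nonneg _)]

/-- The key symbol bound at integer frequencies. -/
lemma key_int (s : ℝ) (hs : 2 < s) (k k' : ℤ) (h : |k| ≤ 2 * |k'|) :
    |jb k ^ s - jb k' ^ s - s * ((k : ℝ) - (k' : ℝ)) * (k' : ℝ) * jb k' ^ (s - 2)|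
      ≤ s * (s - 1) * 4 ^ (s / 2) * (((k : ℝ) - (k' : ℝ)) ^ 2 * jb k' ^ (s - 2)) := by
  have hcast : |(k : ℝ)| ≤ 2 * |(k' : ℝ)| := by
    rw [← Int.cast_abs, ← Int.cast_abs]
    exact_mod_cast h
  have hb := taylor_bound s hs (k : ℝ) (k' : ℝ) hcast
  rw [jb_rpow k s, jb_rpow k' s, jb_rpow k' (s - 2), show (s - 2) / 2 = s / 2 - 1 by ring]
  calc |(1 + (k:ℝ) ^ 2) ^ (s / 2) - (1 + (k':ℝ) ^ 2) ^ (s / 2) -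
        s * ((k:ℝ) - (k':ℝ)) * (k':ℝ) * (1 + (k':ℝ) ^ 2) ^ (s / 2 - 1)|
      ≤ s * (s - 1) * 4 ^ (s / 2) * (1 + (k':ℝ) ^ 2) ^ (s / 2 - 1) * ((k:ℝ) - (k':ℝ)) ^ 2 := hb
    _ = s * (s - 1) * 4 ^ (s / 2) * (((k:ℝ) - (k':ℝ)) ^ 2 * (1 + (k':ℝ) ^ 2) ^ (s / 2 - 1)) := by
        ring

/-! ### ENNReal infrastructure -/

/-- Cauchy-Schwarz for ENNReal tsums over ℤ. -/
lemma tsum_CS (f g : ℤ → ℝ≥0∞) :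
    ∑' k, f k * g k ≤ (∑' k, f k ^ 2) ^ (1/2:ℝ) * (∑' k, g k ^ 2) ^ (1/2:ℝ) := by
  have hpq : Real.HolderConjugate 2 2 := Real.HolderConjugate.two_two
  have h := ENNReal.lintegral_mul_le_Lp_mul_Lq (Measure.count : Measure ℤ) hpq
    (f := f) (g := g) (measurable_of_countable f).aemeasurable
    (measurable_of_countable g).aemeasurable
  rw [lintegral_count, lintegral_count, lintegral_count] at h
  have e : ∀ x : ℝ≥0∞, x ^ (2:ℝ) = x ^ (2:ℕ) := fun x => by
    rw [← ENNReal.rpow_natCast]; norm_num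
  simp only [e, Pi.mul_apply] at h
  exact h

lemma tsum_shift (F : ℤ → ℝ≥0∞) (j : ℤ) : ∑' k, F (k - j) = ∑' k, F k :=
  (Equiv.subRight j).tsum_eq F

lemma tsum_shift' (F : ℤ → ℝ≥0∞) (k : ℤ) : ∑' j, F (k - j) = ∑' j, F j :=
  (Equiv.subLeft k).tsum_eq F

lemma enn_nnnorm_tsum_le {ι : Type*} (f : ι → ℂ) :
    (‖∑' i, f i‖₊ : ℝ≥0∞) ≤ ∑' i, (‖f i‖₊ : ℝ≥0∞) := by
  by_cases h : Summable fun i => ‖f i‖₊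
  · rw [← ENNReal.coe_tsum h]
    exact ENNReal.coe_le_coe.2 (nnnorm_tsum_le h)
  · have : ∑' i, (‖f i‖₊ : ℝ≥0∞) = ⊤ := by
      by_contra hne
      exact h (ENNReal.tsum_coe_ne_top_iff_summable.1 hne)
    simp [this]

lemma sqrt_sq_enn (x : ℝ≥0∞) : (x ^ (1/2:ℝ)) ^ 2 = x := by
  rw [← ENNReal.rpow_natCast (x ^ (1/2:ℝ)) 2, ← ENNReal.rpow_mul]
  norm_num

lemma sq_sqrt_enn (x : ℝ≥0∞) : (x ^ 2) ^ (1/2:ℝ) = x := by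
  rw [← ENNReal.rpow_natCast x 2, ← ENNReal.rpow_mul]
  norm_num

/-- Discrete Young inequality `‖F ⋆ G‖₂² ≤ ‖F‖₁² ‖G‖₂²` in `ℝ≥0∞`. -/
lemma young (F G : ℤ → ℝ≥0∞) :
    ∑' k, (∑' j, F (k - j) * G j) ^ 2 ≤ (∑' j, F j) ^ 2 * ∑' j, (G j) ^ 2 := by
  have hCS : ∀ k, (∑' j, F (k - j) * G j) ^ 2 ≤
      (∑' j, F (k - j)) * ∑' j, F (k - j) * (G j) ^ 2 := by
    intro k
    have h1 : ∀ j, F (k - j) * G j =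
        (F (k - j)) ^ (1/2:ℝ) * ((F (k - j)) ^ (1/2:ℝ) * G j) := by
      intro j
      rw [← mul_assoc, ← ENNReal.rpow_add_of_nonneg _ _ (by norm_num) (by norm_num)]
      norm_num
    have h2 := tsum_CS (fun j => (F (k - j)) ^ (1/2:ℝ)) (fun j => (F (k - j)) ^ (1/2:ℝ) * G j)
    simp only [← h1] at h2
    have h3 : (∑' j, F (k - j) * G j) ^ 2 ≤
        ((∑' j, ((F (k - j)) ^ (1/2:ℝ)) ^ 2) ^ (1/2:ℝ)) ^ 2 *
        ((∑' j, ((F (k - j)) ^ (1/2:ℝ) * G j) ^ 2) ^ (1/2:ℝ)) ^ 2 := by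
      rw [← mul_pow]
      exact pow_le_pow_left₀ (zero_le) h2 2
    rw [sqrt_sq_enn, sqrt_sq_enn] at h3
    refine h3.trans_eq ?_
    congr 1
    · congr 1; funext j; exact sqrt_sq_enn (F (k - j))
    · congr 1; funext j
      rw [mul_pow, sqrt_sq_enn]
  calc ∑' k, (∑' j, F (k - j) * G j) ^ 2
      ≤ ∑' k, (∑' j, F (k - j)) * ∑' j, F (k - j) * (G j) ^ 2 :=
        ENNReal.tsum_le_tsum hCS
    _ = ∑' k, (∑' j, F j) * ∑' j, F (k - j) * (G j) ^ 2 :=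
        tsum_congr fun k => by rw [tsum_shift']
    _ = (∑' j, F j) * ∑' k, ∑' j, F (k - j) * (G j) ^ 2 := by rw [ENNReal.tsum_mul_left]
    _ = (∑' j, F j) * ∑' j, ∑' k, F (k - j) * (G j) ^ 2 := by rw [ENNReal.tsum_comm]
    _ = (∑' j, F j) * ∑' j, (∑' k, F (k - j)) * (G j) ^ 2 := by
        congr 1; exact tsum_congr fun j => by rw [ENNReal.tsum_mul_right]
    _ = (∑' j, F j) * ∑' j, (∑' i, F i) * (G j) ^ 2 := by
        congr 1; exact tsum_congr fun j => by rw [tsum_shift]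
    _ = (∑' j, F j) ^ 2 * ∑' j, (G j) ^ 2 := by
        rw [ENNReal.tsum_mul_left, ← mul_assoc, ← sq]

lemma l2_eq (t : ℝ) (a : ℤ → ℂ) :
    l2 t a = (∑' k, (ENNReal.ofReal (jb k ^ t) * (‖a k‖₊ : ℝ≥0∞)) ^ 2) ^ (1/2:ℝ) := by
  unfold l2
  congr 1
  refine tsum_congr fun k => ?_
  have h1 : jb k ^ (2*t) = (jb k ^ t) ^ 2 := by
    rw [two_mul, Real.rpow_add (jb_pos k), sq]
  rw [h1, ENNReal.ofReal_mul (by positivity), ENNReal.ofReal_pow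
    (le_of_lt (Real.rpow_pos_of_pos (jb_pos k) t)), ENNReal.ofReal_pow (norm_nonneg _),
    ofReal_norm, enorm_eq_nnnorm, mul_pow]

/-- Region `|k'| ≥ |k|/2` piece of the refined commutator, `s > 2`:
`‖I₁‖_{ℓ²} ≤ C ‖a‖_{ℓ²_{5/2+ε}} ‖b‖_{ℓ²_{s−2}}`. -/
theorem refined_commutator_high_piece (s ε : ℝ) (hs : 2 < s) (hε : 0 < ε) :
    ∃ C : ℝ, 0 < C ∧ ∀ a b : ℤ → ℂ,
      l2 0 (fun k => ∑' k' : {m : ℤ // |k| ≤ 2 * |m|},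
          Complex.ofReal
              (jb k ^ s - jb k'.1 ^ s -
                s * ((k : ℝ) - (k'.1 : ℝ)) * (k'.1 : ℝ) * jb k'.1 ^ (s - 2)) *
            a (k - k'.1) * b k'.1)
        ≤ ENNReal.ofReal C * (l2 (5 / 2 + ε) a * l2 (s - 2) b) := by
  set Cs : ℝ := s * (s - 1) * 4 ^ (s / 2) with hCs
  have hCspos : 0 < Cs := by
    have h4 : (0:ℝ) < (4:ℝ) ^ (s / 2) := Real.rpow_pos_of_pos (by norm_num) _
    exact mul_pos (mul_pos (by linarith) (by linarith)) h4
  have hrlt : -(1 + 2 * ε) < (-1 : ℝ) := by linarith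
  have hDsum : Summable (fun j : ℤ => jb j ^ (-(1 + 2 * ε))) := summable_jb_rpow hrlt
  set Dr : ℝ := ∑' j : ℤ, jb j ^ (-(1 + 2 * ε)) with hDr
  have hDrnn : 0 ≤ Dr := tsum_nonneg fun j => (Real.rpow_pos_of_pos (jb_pos j) _).le
  refine ⟨Cs * Dr ^ (1/2:ℝ) + 1, by positivity, fun a b => ?_⟩
  set F : ℤ → ℝ≥0∞ := fun j => ENNReal.ofReal ((j:ℝ)^2) * (‖a j‖₊ : ℝ≥0∞) with hF
  set G : ℤ → ℝ≥0∞ := fun j => ENNReal.ofReal (jb j ^ (s-2)) * (‖b j‖₊ : ℝ≥0∞) with hG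
  set I : ℤ → ℂ := fun k => ∑' k' : {m : ℤ // |k| ≤ 2 * |m|},
      Complex.ofReal
          (jb k ^ s - jb k'.1 ^ s -
            s * ((k : ℝ) - (k'.1 : ℝ)) * (k'.1 : ℝ) * jb k'.1 ^ (s - 2)) *
        a (k - k'.1) * b k'.1 with hI
  -- pointwise bound
  have hpt : ∀ k : ℤ, (‖I k‖₊ : ℝ≥0∞) ≤
      ENNReal.ofReal Cs * ∑' j : ℤ, F (k - j) * G j := by
    intro k
    have hterm : ∀ k' : {m : ℤ // |k| ≤ 2 * |m|},
        (‖Complex.ofReal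
              (jb k ^ s - jb k'.1 ^ s -
                s * ((k : ℝ) - (k'.1 : ℝ)) * (k'.1 : ℝ) * jb k'.1 ^ (s - 2)) *
            a (k - k'.1) * b k'.1‖₊ : ℝ≥0∞)
          ≤ ENNReal.ofReal Cs * (F (k - k'.1) * G k'.1) := by
      intro k'
      rw [nnnorm_mul, nnnorm_mul, Complex.nnnorm_real, ENNReal.coe_mul, ENNReal.coe_mul,
        ← enorm_eq_nnnorm (E := ℝ), Real.enorm_eq_ofReal_abs]
      have hb := key_int s hs k k'.1 k'.2
      calc ENNReal.ofReal
            |jb k ^ s - jb k'.1 ^ s -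
              s * ((k : ℝ) - (k'.1 : ℝ)) * (k'.1 : ℝ) * jb k'.1 ^ (s - 2)|
            * (‖a (k - k'.1)‖₊ : ℝ≥0∞) * (‖b k'.1‖₊ : ℝ≥0∞)
          ≤ ENNReal.ofReal (Cs * (((k:ℝ) - (k'.1:ℝ)) ^ 2 * jb k'.1 ^ (s - 2)))
            * (‖a (k - k'.1)‖₊ : ℝ≥0∞) * (‖b k'.1‖₊ : ℝ≥0∞) := by
            exact mul_le_mul_left (mul_le_mul_left
              (ENNReal.ofReal_le_ofReal hb) _) _
        _ = ENNReal.ofReal Cs * (F (k - k'.1) * G k'.1) := by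
            rw [ENNReal.ofReal_mul hCspos.le,
              ENNReal.ofReal_mul (by positivity : (0:ℝ) ≤ ((k:ℝ) - (k'.1:ℝ)) ^ 2)]
            simp only [hF, hG]
            rw [show ((((k - k'.1 : ℤ)):ℝ)) = ((k:ℝ) - (k'.1:ℝ)) by push_cast; ring]
            ring
    calc (‖I k‖₊ : ℝ≥0∞)
        ≤ ∑' k' : {m : ℤ // |k| ≤ 2 * |m|},
            (‖Complex.ofReal
              (jb k ^ s - jb k'.1 ^ s -
                s * ((k : ℝ) - (k'.1 : ℝ)) * (k'.1 : ℝ) * jb k'.1 ^ (s - 2)) *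
            a (k - k'.1) * b k'.1‖₊ : ℝ≥0∞) := enn_nnnorm_tsum_le _
      _ ≤ ∑' k' : {m : ℤ // |k| ≤ 2 * |m|},
            ENNReal.ofReal Cs * (F (k - k'.1) * G k'.1) := ENNReal.tsum_le_tsum hterm
      _ = ENNReal.ofReal Cs * ∑' k' : {m : ℤ // |k| ≤ 2 * |m|},
            (F (k - k'.1) * G k'.1) := ENNReal.tsum_mul_left
      _ ≤ ENNReal.ofReal Cs * ∑' j : ℤ, F (k - j) * G j := by
            refine mul_le_mul_right ?_ _
            have heq := tsum_subtype {m : ℤ | |k| ≤ 2 * |m|} (fun j => F (k - j) * G j)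
            refine le_trans (le_of_eq heq) ?_
            exact ENNReal.tsum_le_tsum fun m =>
              Set.indicator_apply_le fun _ => le_rfl
  -- ℓ¹ bound for F
  have hFsum : ∑' j, F j ≤ l2 (5/2 + ε) a * ENNReal.ofReal (Dr ^ (1/2:ℝ)) := by
    have hptF : ∀ j : ℤ, F j ≤
        (ENNReal.ofReal (jb j ^ (5/2 + ε)) * (‖a j‖₊ : ℝ≥0∞)) *
          ENNReal.ofReal (jb j ^ (-(1/2 + ε))) := by
      intro j
      have hmul : jb j ^ (5/2 + ε) * jb j ^ (-(1/2 + ε)) = 1 + (j:ℝ)^2 := by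
        rw [← Real.rpow_add (jb_pos j), show (5/2 + ε) + (-(1/2 + ε)) = (2:ℝ) by ring, jb_sq]
      have hle : ((j:ℝ)^2) ≤ jb j ^ (5/2 + ε) * jb j ^ (-(1/2 + ε)) := by
        rw [hmul]; linarith
      calc F j = ENNReal.ofReal ((j:ℝ)^2) * (‖a j‖₊ : ℝ≥0∞) := rfl
        _ ≤ ENNReal.ofReal (jb j ^ (5/2 + ε) * jb j ^ (-(1/2 + ε))) * (‖a j‖₊ : ℝ≥0∞) :=
            mul_le_mul_left (ENNReal.ofReal_le_ofReal hle) _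
        _ = (ENNReal.ofReal (jb j ^ (5/2 + ε)) * (‖a j‖₊ : ℝ≥0∞)) *
              ENNReal.ofReal (jb j ^ (-(1/2 + ε))) := by
            rw [ENNReal.ofReal_mul (Real.rpow_pos_of_pos (jb_pos j) _).le]
            ring
    calc ∑' j, F j
        ≤ ∑' j, (ENNReal.ofReal (jb j ^ (5/2 + ε)) * (‖a j‖₊ : ℝ≥0∞)) *
            ENNReal.ofReal (jb j ^ (-(1/2 + ε))) := ENNReal.tsum_le_tsum hptF
      _ ≤ (∑' j, ((ENNReal.ofReal (jb j ^ (5/2 + ε)) * (‖a j‖₊ : ℝ≥0∞))) ^ 2) ^ (1/2:ℝ) *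
            (∑' j, (ENNReal.ofReal (jb j ^ (-(1/2 + ε)))) ^ 2) ^ (1/2:ℝ) := tsum_CS _ _
      _ = l2 (5/2 + ε) a * ENNReal.ofReal (Dr ^ (1/2:ℝ)) := by
          rw [← l2_eq]
          congr 1
          have he : ∀ j : ℤ, (ENNReal.ofReal (jb j ^ (-(1/2 + ε)))) ^ 2 =
              ENNReal.ofReal (jb j ^ (-(1 + 2 * ε))) := by
            intro j
            rw [← ENNReal.ofReal_pow (Real.rpow_pos_of_pos (jb_pos j) _).le, sq,
              ← Real.rpow_add (jb_pos j), show (-(1/2 + ε)) + (-(1/2 + ε)) = -(1 + 2*ε) by ring]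
          rw [tsum_congr he, ← ENNReal.ofReal_tsum_of_nonneg
            (fun j => (Real.rpow_pos_of_pos (jb_pos j) _).le) hDsum,
            ENNReal.ofReal_rpow_of_nonneg hDrnn (by norm_num)]
  -- ℓ² identity for G
  have hGsum : (∑' j, (G j) ^ 2) ^ (1/2:ℝ) = l2 (s - 2) b := (l2_eq (s - 2) b).symm
  -- main chain
  have hl2I : l2 0 I = (∑' k, ((‖I k‖₊ : ℝ≥0∞)) ^ 2) ^ (1/2:ℝ) := by
    unfold l2
    congr 1
    refine tsum_congr fun k => ?_
    rw [mul_zero, Real.rpow_zero, one_mul, ENNReal.ofReal_pow (norm_nonneg _),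
      ofReal_norm, enorm_eq_nnnorm]
  calc l2 0 I = (∑' k, ((‖I k‖₊ : ℝ≥0∞)) ^ 2) ^ (1/2:ℝ) := hl2I
    _ ≤ ((ENNReal.ofReal Cs) ^ 2 * ((∑' j, F j) ^ 2 * ∑' j, (G j) ^ 2)) ^ (1/2:ℝ) := by
        apply ENNReal.rpow_le_rpow ?_ (by norm_num)
        calc ∑' k, ((‖I k‖₊ : ℝ≥0∞)) ^ 2
            ≤ ∑' k, (ENNReal.ofReal Cs * ∑' j, F (k - j) * G j) ^ 2 :=
              ENNReal.tsum_le_tsum fun k => pow_le_pow_left₀ (zero_le) (hpt k) 2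
          _ = (ENNReal.ofReal Cs) ^ 2 * ∑' k, (∑' j, F (k - j) * G j) ^ 2 := by
              rw [← ENNReal.tsum_mul_left]
              exact tsum_congr fun k => by rw [mul_pow]
          _ ≤ (ENNReal.ofReal Cs) ^ 2 * ((∑' j, F j) ^ 2 * ∑' j, (G j) ^ 2) :=
              mul_le_mul_right (young F G) _
    _ = ENNReal.ofReal Cs * ((∑' j, F j) * (∑' j, (G j) ^ 2) ^ (1/2:ℝ)) := by
        rw [ENNReal.mul_rpow_of_nonneg _ _ (by norm_num),
          ENNReal.mul_rpow_of_nonneg _ _ (by norm_num), sq_sqrt_enn, sq_sqrt_enn]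
    _ ≤ ENNReal.ofReal Cs * ((l2 (5/2 + ε) a * ENNReal.ofReal (Dr ^ (1/2:ℝ))) *
          l2 (s - 2) b) := by
        refine mul_le_mul_right ?_ _
        rw [hGsum]
        exact mul_le_mul_left hFsum _
    _ ≤ ENNReal.ofReal (Cs * Dr ^ (1/2:ℝ) + 1) * (l2 (5/2 + ε) a * l2 (s - 2) b) := by
        have he : ENNReal.ofReal Cs * ((l2 (5/2 + ε) a * ENNReal.ofReal (Dr ^ (1/2:ℝ))) *
            l2 (s - 2) b) = (ENNReal.ofReal Cs * ENNReal.ofReal (Dr ^ (1/2:ℝ))) *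
            (l2 (5/2 + ε) a * l2 (s - 2) b) := by ring
        rw [he, ← ENNReal.ofReal_mul hCspos.le]
        exact mul_le_mul_left (ENNReal.ofReal_le_ofReal (by nlinarith)) _
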